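/- (Convergence of the steepest descent method) Assume Assumptions A1 and A2 hold for the initial point x⁰. Consider the iteration x^{k+1} = x^k + t_k v(x^k) for k ≥ 0, where v(x^k) ≠ 0 for all k and each t_k > 0 satisfies the standard Wolfe conditions at x^k along v(x^k). Then Σ_{k≥0} ‖v(x^k)‖² < +∞; in particular lim_{k→∞} ‖v(x^k)‖ = 0. -/

import Mathlib

open scoped BigOperators

noncomputable def pd (n : ℕ) (F : EuclideanSpace ℝ (Fin n) → ℝ)
    (x : EuclideanSpace ℝ (Fin n)) (j : Fin n) : ℝ :=
  fderiv ℝ F x (EuclideanSpace.single j (1 : ℝ))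

noncomputable def glo (n : ℕ) (F H : EuclideanSpace ℝ (Fin n) → ℝ)
    (x : EuclideanSpace ℝ (Fin n)) (j : Fin n) : ℝ :=
  min (pd n F x j) (pd n H x j)

noncomputable def ghi (n : ℕ) (F H : EuclideanSpace ℝ (Fin n) → ℝ)
    (x : EuclideanSpace ℝ (Fin n)) (j : Fin n) : ℝ :=
  max (pd n F x j) (pd n H x j)

noncomputable def gloVec (n : ℕ) (F H : EuclideanSpace ℝ (Fin n) → ℝ)
    (x : EuclideanSpace ℝ (Fin n)) : EuclideanSpace ℝ (Fin n) :=
  WithLp.toLp 2 (fun j => glo n F H x j)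

noncomputable def ghiVec (n : ℕ) (F H : EuclideanSpace ℝ (Fin n) → ℝ)
    (x : EuclideanSpace ℝ (Fin n)) : EuclideanSpace ℝ (Fin n) :=
  WithLp.toLp 2 (fun j => ghi n F H x j)

noncomputable def psi (m n : ℕ) (Gl Gu : Fin m → EuclideanSpace ℝ (Fin n) → ℝ)
    (x v : EuclideanSpace ℝ (Fin n)) : ℝ :=
  ⨆ i : Fin m, (1 / 2 : ℝ) *
    ((∑ j : Fin n, (glo n (Gl i) (Gu i) x j + ghi n (Gl i) (Gu i) x j) * v j) +
     (∑ j : Fin n, (ghi n (Gl i) (Gu i) x j - glo n (Gl i) (Gu i) x j) * |v j|))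

def LevelSet (m n : ℕ) (Gl Gu : Fin m → EuclideanSpace ℝ (Fin n) → ℝ)
    (x0 : EuclideanSpace ℝ (Fin n)) : Set (EuclideanSpace ℝ (Fin n)) :=
  {x | ∀ i : Fin m, Gl i x ≤ Gl i x0 ∧ Gu i x ≤ Gu i x0}

def StdWolfe (m n : ℕ) (Gl Gu : Fin m → EuclideanSpace ℝ (Fin n) → ℝ)
    (ρ σ : ℝ) (x d : EuclideanSpace ℝ (Fin n)) (t : ℝ) : Prop :=
  (∀ i : Fin m,
      Gl i (x + t • d) ≤ Gl i x + ρ * t * psi m n Gl Gu x d ∧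
      Gu i (x + t • d) ≤ Gu i x + ρ * t * psi m n Gl Gu x d) ∧
  σ * psi m n Gl Gu x d ≤ psi m n Gl Gu (x + t • d) d

def StrongWolfe (m n : ℕ) (Gl Gu : Fin m → EuclideanSpace ℝ (Fin n) → ℝ)
    (ρ σ : ℝ) (x d : EuclideanSpace ℝ (Fin n)) (t : ℝ) : Prop :=
  (∀ i : Fin m,
      Gl i (x + t • d) ≤ Gl i x + ρ * t * psi m n Gl Gu x d ∧
      Gu i (x + t • d) ≤ Gu i x + ρ * t * psi m n Gl Gu x d) ∧
  |psi m n Gl Gu (x + t • d) d| ≤ σ * |psi m n Gl Gu x d|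

def AssumptionA1 (m n : ℕ) (Gl Gu : Fin m → EuclideanSpace ℝ (Fin n) → ℝ)
    (x0 : EuclideanSpace ℝ (Fin n)) : Prop :=
  ∀ i : Fin m, ∃ L : ℝ, 0 < L ∧
    ∀ y ∈ LevelSet m n Gl Gu x0, ∀ z ∈ LevelSet m n Gl Gu x0,
      ‖gloVec n (Gl i) (Gu i) y - gloVec n (Gl i) (Gu i) z‖ ≤ L * ‖y - z‖ ∧
      ‖ghiVec n (Gl i) (Gu i) y - ghiVec n (Gl i) (Gu i) z‖ ≤ L * ‖y - z‖

def AssumptionA2 (m n : ℕ) (Gl Gu : Fin m → EuclideanSpace ℝ (Fin n) → ℝ)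
    (x0 : EuclideanSpace ℝ (Fin n)) : Prop :=
  ∀ y : ℕ → EuclideanSpace ℝ (Fin n),
    (∀ k, y k ∈ LevelSet m n Gl Gu x0) →
    (∀ (i : Fin m) (k : ℕ), Gl i (y (k+1)) ≤ Gl i (y k) ∧ Gu i (y (k+1)) ≤ Gu i (y k)) →
    ∀ i : Fin m, (∃ Cl : ℝ, ∀ k, Cl ≤ Gl i (y k)) ∧ (∃ Cu : ℝ, ∀ k, Cu ≤ Gu i (y k))

/-!
Condition (W1) makes every endpoint function drop by at least `ρ tₖ (-ψₖ)` along the iteration,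
where `ψₖ = ψ_{xᵏ}(v(xᵏ))`; so the iterates stay in `L₀` and, by A2, `∑ tₖ (-ψₖ) < ∞`.
Comparing `v(x)` with `w = 0` in its defining minimization gives `ψₖ ≤ -‖v(xᵏ)‖² / 2`.
By A1, `ψ_y(d) - ψ_z(d) ≤ 2L ‖y - z‖ ‖d‖` on `L₀`, so (W2) forces `tₖ ≥ (1 - σ) / (4L)`.
Hence `‖v(xᵏ)‖² ≤ 2 (-ψₖ) ≤ 8L / (1 - σ) · tₖ (-ψₖ)`, a summable bound.
-/

lemma EuclideanSpace.sum_abs_mul_abs_le {ι : Type*} [Fintype ι] (u d : EuclideanSpace ℝ ι) :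
    ∑ j, |u j| * |d j| ≤ ‖u‖ * ‖d‖ :=
  calc ∑ j, |u j| * |d j| ≤ √(∑ j, |u j| ^ 2) * √(∑ j, |d j| ^ 2) :=
        Real.sum_mul_le_sqrt_mul_sqrt _ _ _
    _ = ‖u‖ * ‖d‖ := by simp [EuclideanSpace.norm_eq]

lemma half_mul_add_add_sub_mul_abs_le (a b d : ℝ) :
    (1 / 2) * ((a + b) * d + (b - a) * |d|) ≤ (|a| + |b|) * |d| := by
  have h₁ : (a + b) * d ≤ (|a| + |b|) * |d| :=
    (le_abs_self _).trans <| by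
      rw [abs_mul]; exact mul_le_mul_of_nonneg_right (abs_add_le a b) (abs_nonneg d)
  have h₂ : (b - a) * |d| ≤ (|a| + |b|) * |d| :=
    mul_le_mul_of_nonneg_right ((le_abs_self _).trans ((abs_sub b a).trans (by linarith)))
      (abs_nonneg d)
  linarith

noncomputable def psiComponent (m n : ℕ) (Gl Gu : Fin m → EuclideanSpace ℝ (Fin n) → ℝ)
    (i : Fin m) (x v : EuclideanSpace ℝ (Fin n)) : ℝ :=
  (1 / 2 : ℝ) *
    ((∑ j : Fin n, (glo n (Gl i) (Gu i) x j + ghi n (Gl i) (Gu i) x j) * v j) +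
     (∑ j : Fin n, (ghi n (Gl i) (Gu i) x j - glo n (Gl i) (Gu i) x j) * |v j|))

section Psi

variable {m n : ℕ} {Gl Gu : Fin m → EuclideanSpace ℝ (Fin n) → ℝ}

lemma psi_eq_iSup_psiComponent (x v : EuclideanSpace ℝ (Fin n)) :
    psi m n Gl Gu x v = ⨆ i, psiComponent m n Gl Gu i x v := rfl

lemma psiComponent_le_psi (i : Fin m) (x v : EuclideanSpace ℝ (Fin n)) :
    psiComponent m n Gl Gu i x v ≤ psi m n Gl Gu x v :=
  le_ciSup (f := fun i => psiComponent m n Gl Gu i x v) (Set.finite_range _).bddAbove i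

@[simp]
lemma psi_zero (x : EuclideanSpace ℝ (Fin n)) : psi m n Gl Gu x 0 = 0 := by
  simp [psi]

lemma nonempty_of_psi_ne_zero {x v : EuclideanSpace ℝ (Fin n)} (h : psi m n Gl Gu x v ≠ 0) :
    Nonempty (Fin m) := by
  by_contra hm
  rw [not_nonempty_iff] at hm
  exact h (Real.iSup_of_isEmpty _)

lemma psi_le_neg_half_sq_of_forall_le {x v : EuclideanSpace ℝ (Fin n)}
    (hv : ∀ w, psi m n Gl Gu x v + (1 / 2) * ‖v‖ ^ 2 ≤ psi m n Gl Gu x w + (1 / 2) * ‖w‖ ^ 2) :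
    psi m n Gl Gu x v ≤ -(1 / 2) * ‖v‖ ^ 2 := by
  have := hv 0
  simp only [psi_zero, norm_zero] at this
  linarith

lemma psiComponent_sub_psiComponent_le (i : Fin m) (y z d : EuclideanSpace ℝ (Fin n)) :
    psiComponent m n Gl Gu i y d - psiComponent m n Gl Gu i z d ≤
      (‖gloVec n (Gl i) (Gu i) y - gloVec n (Gl i) (Gu i) z‖ +
        ‖ghiVec n (Gl i) (Gu i) y - ghiVec n (Gl i) (Gu i) z‖) * ‖d‖ := by
  set u := gloVec n (Gl i) (Gu i) y - gloVec n (Gl i) (Gu i) z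
  set w := ghiVec n (Gl i) (Gu i) y - ghiVec n (Gl i) (Gu i) z
  have hdiff : psiComponent m n Gl Gu i y d - psiComponent m n Gl Gu i z d =
      ∑ j, (1 / 2) * ((u j + w j) * d j + (w j - u j) * |d j|) := by
    simp only [psiComponent, u, w, gloVec, ghiVec, PiLp.sub_apply, Finset.mul_sum,
      ← Finset.sum_add_distrib, ← Finset.sum_sub_distrib, mul_add]
    exact Finset.sum_congr rfl fun j _ => by ring
  calc _ = ∑ j, (1 / 2) * ((u j + w j) * d j + (w j - u j) * |d j|) := hdiff
    _ ≤ ∑ j, (|u j| + |w j|) * |d j| :=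
        Finset.sum_le_sum fun j _ => half_mul_add_add_sub_mul_abs_le _ _ _
    _ = ∑ j, |u j| * |d j| + ∑ j, |w j| * |d j| := by
        simp only [add_mul, Finset.sum_add_distrib]
    _ ≤ ‖u‖ * ‖d‖ + ‖w‖ * ‖d‖ :=
        add_le_add (EuclideanSpace.sum_abs_mul_abs_le u d) (EuclideanSpace.sum_abs_mul_abs_le w d)
    _ = (‖u‖ + ‖w‖) * ‖d‖ := by ring

lemma psi_le_psi_add [Nonempty (Fin m)] {L : ℝ} {y z : EuclideanSpace ℝ (Fin n)}
    (hlo : ∀ i, ‖gloVec n (Gl i) (Gu i) y - gloVec n (Gl i) (Gu i) z‖ ≤ L * ‖y - z‖)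
    (hhi : ∀ i, ‖ghiVec n (Gl i) (Gu i) y - ghiVec n (Gl i) (Gu i) z‖ ≤ L * ‖y - z‖)
    (d : EuclideanSpace ℝ (Fin n)) :
    psi m n Gl Gu y d ≤ psi m n Gl Gu z d + 2 * L * ‖y - z‖ * ‖d‖ := by
  rw [psi_eq_iSup_psiComponent y]
  refine ciSup_le fun i => ?_
  have hsub := psiComponent_sub_psiComponent_le (Gl := Gl) (Gu := Gu) i y z d
  have hz := psiComponent_le_psi (Gl := Gl) (Gu := Gu) i z d
  linarith [mul_le_mul_of_nonneg_right (add_le_add (hlo i) (hhi i)) (norm_nonneg d)]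

lemma AssumptionA1.exists_psi_le [Nonempty (Fin m)] {x₀ : EuclideanSpace ℝ (Fin n)}
    (h : AssumptionA1 m n Gl Gu x₀) :
    ∃ L, 0 ≤ L ∧ ∀ y ∈ LevelSet m n Gl Gu x₀, ∀ z ∈ LevelSet m n Gl Gu x₀, ∀ d,
      psi m n Gl Gu y d ≤ psi m n Gl Gu z d + 2 * L * ‖y - z‖ * ‖d‖ := by
  choose L hL using h
  have hLle : ∀ i, L i ≤ ∑ j, L j := fun i =>
    Finset.single_le_sum (fun j _ => (hL j).1.le) (Finset.mem_univ i)
  refine ⟨∑ i, L i, Finset.sum_nonneg fun i _ => (hL i).1.le, fun y hy z hz => ?_⟩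
  apply psi_le_psi_add <;> intro i
  · exact ((hL i).2 y hy z hz).1.trans
      (mul_le_mul_of_nonneg_right (hLle i) (norm_nonneg _))
  · exact ((hL i).2 y hy z hz).2.trans
      (mul_le_mul_of_nonneg_right (hLle i) (norm_nonneg _))

end Psi

lemma mem_levelSet_of_forall_succ_le {m n : ℕ} {Gl Gu : Fin m → EuclideanSpace ℝ (Fin n) → ℝ}
    {x : ℕ → EuclideanSpace ℝ (Fin n)}
    (hx : ∀ i k, Gl i (x (k + 1)) ≤ Gl i (x k) ∧ Gu i (x (k + 1)) ≤ Gu i (x k)) (k : ℕ) :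
    x k ∈ LevelSet m n Gl Gu (x 0) := fun i =>
  ⟨antitone_nat_of_succ_le (f := fun k => Gl i (x k)) (fun k => (hx i k).1) (Nat.zero_le k),
    antitone_nat_of_succ_le (f := fun k => Gu i (x k)) (fun k => (hx i k).2) (Nat.zero_le k)⟩

namespace StdWolfe

variable {m n : ℕ} {Gl Gu : Fin m → EuclideanSpace ℝ (Fin n) → ℝ} {ρ σ t : ℝ}
  {x d : EuclideanSpace ℝ (Fin n)}

lemma add_le (hW : StdWolfe m n Gl Gu ρ σ x d t) (i : Fin m) :
    Gl i (x + t • d) + ρ * (t * -psi m n Gl Gu x d) ≤ Gl i x ∧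
      Gu i (x + t • d) + ρ * (t * -psi m n Gl Gu x d) ≤ Gu i x := by
  obtain ⟨hl, hu⟩ := hW.1 i
  constructor <;> linarith

lemma one_sub_le_mul (hW : StdWolfe m n Gl Gu ρ σ x d t) (ht : 0 ≤ t) {L : ℝ} (hL : 0 ≤ L)
    (hLip : psi m n Gl Gu (x + t • d) d ≤ psi m n Gl Gu x d + 2 * L * ‖x + t • d - x‖ * ‖d‖)
    (hψ : psi m n Gl Gu x d ≤ -(1 / 2) * ‖d‖ ^ 2) (hd : d ≠ 0) :
    1 - σ ≤ 4 * L * t := by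
  rw [add_sub_cancel_left, norm_smul, Real.norm_of_nonneg ht] at hLip
  have hcurv : (1 - σ) * -psi m n Gl Gu x d ≤ 2 * L * t * ‖d‖ ^ 2 := by
    nlinarith [hW.2]
  have hd2 : 0 < ‖d‖ ^ 2 := by positivity
  have hLt : 0 ≤ L * t := mul_nonneg hL ht
  nlinarith [mul_le_mul_of_nonneg_left hψ hLt]

end StdWolfe

lemma summable_of_forall_add_le_of_bddBelow {f a : ℕ → ℝ} (ha : ∀ k, 0 ≤ a k)
    (h : ∀ k, f (k + 1) + a k ≤ f k) (hf : BddBelow (Set.range f)) : Summable a := by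
  obtain ⟨C, hC⟩ := hf
  refine summable_of_sum_range_le ha (c := f 0 - C) fun N => ?_
  calc ∑ k ∈ Finset.range N, a k ≤ ∑ k ∈ Finset.range N, (f k - f (k + 1)) :=
        Finset.sum_le_sum fun k _ => by linarith [h k]
    _ = f 0 - f N := Finset.sum_range_sub' f N
    _ ≤ f 0 - C := by linarith [hC (Set.mem_range_self N)]

theorem steepest_descent_convergence_general (m n : ℕ)
    (Gl Gu : Fin m → EuclideanSpace ℝ (Fin n) → ℝ)
    (vv : EuclideanSpace ℝ (Fin n) → EuclideanSpace ℝ (Fin n))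
    (hvmin : ∀ y w : EuclideanSpace ℝ (Fin n),
      psi m n Gl Gu y (vv y) + (1/2) * ‖vv y‖^2 ≤ psi m n Gl Gu y w + (1/2) * ‖w‖^2)
    (ρ σ : ℝ) (hρ : 0 < ρ) (hσ : σ < 1)
    (x : ℕ → EuclideanSpace ℝ (Fin n)) (t : ℕ → ℝ)
    (hx : ∀ k : ℕ, x (k+1) = x k + t k • vv (x k))
    (hvne : ∀ k : ℕ, vv (x k) ≠ 0)
    (ht : ∀ k : ℕ, 0 < t k ∧ StdWolfe m n Gl Gu ρ σ (x k) (vv (x k)) (t k))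
    (hA1 : AssumptionA1 m n Gl Gu (x 0))
    (hA2 : AssumptionA2 m n Gl Gu (x 0)) :
    Summable (fun k : ℕ => ‖vv (x k)‖^2) ∧
      Filter.Tendsto (fun k : ℕ => ‖vv (x k)‖) Filter.atTop (nhds 0) := by
  set ψ : ℕ → ℝ := fun k => psi m n Gl Gu (x k) (vv (x k))
  have hψ (k : ℕ) : ψ k ≤ -(1 / 2) * ‖vv (x k)‖ ^ 2 :=
    psi_le_neg_half_sq_of_forall_le (hvmin (x k))
  have hψneg (k : ℕ) : 0 < -ψ k := by
    have := norm_pos_iff.2 (hvne k); nlinarith [hψ k]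
  have hm : Nonempty (Fin m) := nonempty_of_psi_ne_zero (neg_pos.1 (hψneg 0)).ne
  have hdesc (i : Fin m) (k : ℕ) := hx k ▸ (ht k).2.add_le i
  have hdecr (i : Fin m) (k : ℕ) :
      Gl i (x (k + 1)) ≤ Gl i (x k) ∧ Gu i (x (k + 1)) ≤ Gu i (x k) := by
    have := mul_pos hρ (mul_pos (ht k).1 (hψneg k))
    exact ⟨by linarith [(hdesc i k).1], by linarith [(hdesc i k).2]⟩
  have hmem := mem_levelSet_of_forall_succ_le hdecr
  obtain ⟨L, hL, hLip⟩ := hA1.exists_psi_le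
  have hv (k : ℕ) : (1 - σ) * ‖vv (x k)‖ ^ 2 ≤ 8 * L * (t k * -ψ k) := by
    have hstep := (ht k).2.one_sub_le_mul (ht k).1.le hL
      (hx k ▸ hLip _ (hmem (k + 1)) _ (hmem k) _) (hψ k) (hvne k)
    nlinarith [mul_le_mul_of_nonneg_right hstep (sq_nonneg ‖vv (x k)‖), (ht k).1, hψ k]
  obtain ⟨i⟩ := hm
  have hsum : Summable fun k => t k * -ψ k :=
    (summable_mul_left_iff hρ.ne').1 <| summable_of_forall_add_le_of_bddBelow
      (fun k => (mul_pos hρ (mul_pos (ht k).1 (hψneg k))).le) (fun k => (hdesc i k).1)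
      (let ⟨C, hC⟩ := (hA2 x hmem hdecr i).1; ⟨C, Set.forall_mem_range.2 hC⟩)
  have hsq : Summable fun k => ‖vv (x k)‖ ^ 2 :=
    (summable_mul_left_iff (by linarith : 1 - σ ≠ 0)).1 <|
      (hsum.mul_left (8 * L)).of_nonneg_of_le
        (fun k => mul_nonneg (by linarith) (sq_nonneg _)) hv
  exact ⟨hsq, by simpa using hsq.tendsto_atTop_zero.sqrt⟩

theorem steepest_descent_convergence (m n : ℕ) (hm : 0 < m) (hn : 0 < n)
    (Gl Gu : Fin m → EuclideanSpace ℝ (Fin n) → ℝ)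
    (hGl : ∀ i, ContDiff ℝ 1 (Gl i)) (hGu : ∀ i, ContDiff ℝ 1 (Gu i))
    (hle : ∀ (i : Fin m) (x : EuclideanSpace ℝ (Fin n)), Gl i x ≤ Gu i x)
    (vv : EuclideanSpace ℝ (Fin n) → EuclideanSpace ℝ (Fin n))
    (hvmin : ∀ y w : EuclideanSpace ℝ (Fin n),
      psi m n Gl Gu y (vv y) + (1/2) * ‖vv y‖^2 ≤ psi m n Gl Gu y w + (1/2) * ‖w‖^2)
    (ρ σ : ℝ) (hρ : 0 < ρ) (hρσ : ρ < σ) (hσ : σ < 1)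
    (x : ℕ → EuclideanSpace ℝ (Fin n)) (t : ℕ → ℝ)
    (hx : ∀ k : ℕ, x (k+1) = x k + t k • vv (x k))
    (hvne : ∀ k : ℕ, vv (x k) ≠ 0)
    (ht : ∀ k : ℕ, 0 < t k ∧ StdWolfe m n Gl Gu ρ σ (x k) (vv (x k)) (t k))
    (hA1 : AssumptionA1 m n Gl Gu (x 0))
    (hA2 : AssumptionA2 m n Gl Gu (x 0)) :
    Summable (fun k : ℕ => ‖vv (x k)‖^2) ∧
      Filter.Tendsto (fun k : ℕ => ‖vv (x k)‖) Filter.atTop (nhds 0) :=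
  steepest_descent_convergence_general m n Gl Gu vv hvmin ρ σ hρ hσ x t hx hvne ht hA1 hA2
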